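/- In the pivoted graph G ∧ uv, for any vertex w ∉ {u,v}, w is adjacent to u in G ∧ uv if and only if w is adjacent to v in G. -/

import Mathlib

/-- Local complementation of `G` about `u`: edges between distinct neighbours of `u`
are complemented, all other adjacencies preserved. -/
def localComp {V : Type*} (G : SimpleGraph V) (u : V) : SimpleGraph V where
  Adj a b := (G.Adj a b ∧ ¬(G.Adj u a ∧ G.Adj u b ∧ a ≠ b)) ∨
             (¬ G.Adj a b ∧ (G.Adj u a ∧ G.Adj u b ∧ a ≠ b))
  symm := by
    constructor
    intro a b h
    rcases h with ⟨h1, h2⟩ | ⟨h1, h2, h3, h4⟩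
    · exact Or.inl ⟨h1.symm, fun ⟨x, y, z⟩ => h2 ⟨y, x, z.symm⟩⟩
    · exact Or.inr ⟨fun hc => h1 hc.symm, h3, h2, h4.symm⟩
  loopless := by
    constructor
    intro a h
    rcases h with ⟨h1, _⟩ | ⟨_, _, _, h4⟩
    · exact G.loopless.irrefl a h1
    · exact h4 rfl


/-- Pivot of G about the edge (u,v). -/
def pivot {V : Type*} (G : SimpleGraph V) (u v : V) : SimpleGraph V :=
  localComp (localComp (localComp G u) v) u


lemma localComp_adj {V : Type*} (G : SimpleGraph V) (u a b : V) :
    (localComp G u).Adj a b ↔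
      (G.Adj a b ∧ ¬(G.Adj u a ∧ G.Adj u b ∧ a ≠ b)) ∨
      (¬ G.Adj a b ∧ (G.Adj u a ∧ G.Adj u b ∧ a ≠ b)) := Iff.rfl

lemma localComp_adj_self_left {V : Type*} (G : SimpleGraph V) (u x : V) :
    (localComp G u).Adj u x ↔ G.Adj u x := by
  rw [localComp_adj]
  have h1 : ¬ G.Adj u u := G.loopless.irrefl u
  tauto

/-- In the pivoted graph the neighbourhoods of u and v are swapped: any vertex
outside {u, v} is adjacent to u in G ∧ uv iff it is adjacent to v in G. -/
theorem pivot_adj_swap {V : Type*} (G : SimpleGraph V) (u v : V) (huv : G.Adj u v) :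
    ∀ w : V, w ≠ u → w ≠ v → ((pivot G u v).Adj u w ↔ G.Adj v w) := by
  intro w hwu hwv
  have huu : ¬ G.Adj u u := G.loopless.irrefl u
  have hvu : G.Adj v u := huv.symm
  have hX : (localComp G u).Adj v w ↔ ((G.Adj v w ∧ ¬ G.Adj u w) ∨ (¬ G.Adj v w ∧ G.Adj u w)) := by
    rw [localComp_adj]
    have hne : v ≠ w := fun h => hwv h.symm
    tauto
  have hVU : (localComp G u).Adj v u := by
    rw [localComp_adj]; tauto
  have h2 : (localComp (localComp G u) v).Adj u w ↔ G.Adj v w := by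
    rw [localComp_adj, localComp_adj_self_left, hX]
    have hne : u ≠ w := fun h => hwu h.symm
    by_cases h : G.Adj u w <;> by_cases h' : G.Adj v w <;> tauto
  show (localComp (localComp (localComp G u) v) u).Adj u w ↔ G.Adj v w
  rw [localComp_adj_self_left, h2]
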